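/- Under the hypotheses of the F-family, if in addition b ≥ 0.1 and c ≤ 0.5, then the case R+ fails, i.e. M̃ > M; more precisely ξ₄ − ξ₃ > z₄ − z₃ = M. -/

import Mathlib

/-!
Write `F'(x) = 5 (x - ξ₁)(x - ξ₂)(x - ξ₃)(x - ξ₄)`. Rolle's theorem on `[0, b]` gives `ξ₁ < b`,
and `F'(b) = b (b - a)(b - c)(b - 1) ≥ 0` then forces `ξ₂ ≤ b` as well. A quartic with positive
leading coefficient that is negative at a point to the right of two of its roots lies strictly
between the other two there. For `b ≥ 1/10`, `c ≤ 1/2` the derivative is negative at both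
`u = (18 + 3a + 34b + 20c)/80 > b` and `u + (1 - b)/2`, so `ξ₃ < u` and `u + (1 - b)/2 < ξ₄`;
hence `ξ₄ - ξ₃ > (1 - b)/2 = z₄ - z₃`, which for `b, c ≤ 1/2` is the largest midpoint gap.
-/

open Set

section RootProduct

variable {ξ₁ ξ₂ ξ₃ ξ₄ x : ℝ}

theorem root_prod_pos_of_lt (h₁₂ : ξ₁ ≤ ξ₂) (h₂₃ : ξ₂ ≤ ξ₃) (h₃₄ : ξ₃ ≤ ξ₄) (hx : x < ξ₁) :
    0 < (x - ξ₁) * (x - ξ₂) * (x - ξ₃) * (x - ξ₄) :=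
  mul_pos_of_neg_of_neg
    (mul_neg_of_pos_of_neg (mul_pos_of_neg_of_neg (by linarith) (by linarith)) (by linarith))
    (by linarith)

theorem root_prod_neg_of_mem_Ioo (h₂₃ : ξ₂ ≤ ξ₃) (h₃₄ : ξ₃ ≤ ξ₄) (hx : x ∈ Ioo ξ₁ ξ₂) :
    (x - ξ₁) * (x - ξ₂) * (x - ξ₃) * (x - ξ₄) < 0 :=
  mul_neg_of_pos_of_neg
    (mul_pos_of_neg_of_neg (mul_neg_of_pos_of_neg (sub_pos.2 hx.1) (sub_neg.2 hx.2))
      (by linarith [hx.2]))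
    (by linarith [hx.2])

theorem mem_Ioo_of_root_prod_neg (h₁₂ : ξ₁ ≤ ξ₂) (h₃₄ : ξ₃ ≤ ξ₄) (hx : ξ₂ < x)
    (h : (x - ξ₁) * (x - ξ₂) * (x - ξ₃) * (x - ξ₄) < 0) : x ∈ Ioo ξ₃ ξ₄ := by
  have h₁₂x : 0 < (x - ξ₁) * (x - ξ₂) := mul_pos (by linarith) (by linarith)
  by_contra hx'
  rw [mem_Ioo, not_and_or, not_lt, not_lt] at hx'
  refine h.not_ge ?_
  rcases hx' with h₃ | h₄
  · rw [mul_assoc]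
    exact mul_nonneg h₁₂x.le (mul_nonneg_of_nonpos_of_nonpos (by linarith) (by linarith))
  · exact mul_nonneg (mul_nonneg h₁₂x.le (by linarith)) (by linarith)

end RootProduct

theorem mul_nonneg₄ {α : Type*} [Semiring α] [PartialOrder α] [IsOrderedRing α] {w x y z : α}
    (hw : 0 ≤ w) (hx : 0 ≤ x) (hy : 0 ≤ y) (hz : 0 ≤ z) : 0 ≤ w * x * y * z :=
  mul_nonneg (mul_nonneg (mul_nonneg hw hx) hy) hz

def fFamilyDeriv (a b c x : ℝ) : ℝ :=
  5 * x ^ 4 - 4 * (1 + a + b + c) * x ^ 3 + 3 * (a + b + c + a * b + a * c + b * c) * x ^ 2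
    - 2 * (a * b + a * c + b * c + a * b * c) * x + a * b * c

theorem hasDerivAt_fFamily (a b c x : ℝ) :
    HasDerivAt (fun t : ℝ => t * (t - a) * (t - b) * (t - c) * (t - 1))
      (fFamilyDeriv a b c x) x := by
  have hx := hasDerivAt_id' x
  refine ((((hx.mul (hx.sub_const a)).mul (hx.sub_const b)).mul (hx.sub_const c)).mul
    (hx.sub_const 1)).congr_deriv ?_
  simp only [fFamilyDeriv, Pi.mul_apply]
  ring

section FFamily

variable {a b c : ℝ}

theorem exists_fFamilyDeriv_eq_zero (hb : 0 < b) : ∃ w ∈ Ioo 0 b, fFamilyDeriv a b c w = 0 :=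
  exists_hasDerivAt_eq_zero hb (by fun_prop) (by ring) fun x _ => hasDerivAt_fFamily a b c x

theorem fFamilyDeriv_second_root_le {ξ₁ ξ₂ ξ₃ ξ₄ : ℝ} (hb : 0 < b) (hab : a ≤ b) (hbc : b ≤ c)
    (hb1 : b ≤ 1) (h₁₂ : ξ₁ ≤ ξ₂) (h₂₃ : ξ₂ ≤ ξ₃) (h₃₄ : ξ₃ ≤ ξ₄)
    (hroots : ∀ x, fFamilyDeriv a b c x = 5 * ((x - ξ₁) * (x - ξ₂) * (x - ξ₃) * (x - ξ₄))) :
    ξ₂ ≤ b := by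
  obtain ⟨w, hw, hw0⟩ := exists_fFamilyDeriv_eq_zero (a := a) (c := c) hb
  have hξ₁ : ξ₁ < b := by
    by_contra! h
    have := root_prod_pos_of_lt h₁₂ h₂₃ h₃₄ (hw.2.trans_le h)
    rw [hroots] at hw0
    linarith
  by_contra! hξ₂
  have hneg := root_prod_neg_of_mem_Ioo h₂₃ h₃₄ ⟨hξ₁, hξ₂⟩
  have hb_nonneg : 0 ≤ fFamilyDeriv a b c b := by
    have hb_eq : fFamilyDeriv a b c b = b * (b - a) * ((c - b) * (1 - b)) := by
      unfold fFamilyDeriv; ring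
    rw [hb_eq]
    exact mul_nonneg (mul_nonneg hb.le (sub_nonneg.2 hab))
      (mul_nonneg (sub_nonneg.2 hbc) (sub_nonneg.2 hb1))
  rw [hroots] at hb_nonneg
  linarith

theorem fFamilyDeriv_neg_left (ha : 0 ≤ a) (hab : a ≤ b) (hbc : b ≤ c)
    (hb : 1 / 10 ≤ b) (hc : c ≤ 1 / 2) :
    fFamilyDeriv a b c ((18 + 3 * a + 34 * b + 20 * c) / 80) < 0 := by
  have h₁ : 0 ≤ b - a := sub_nonneg.2 hab
  have h₂ : 0 ≤ c - b := sub_nonneg.2 hbc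
  have h₃ : 0 ≤ 1 / 2 - c := sub_nonneg.2 hc
  have h₄ : 0 ≤ b - 1 / 10 := sub_nonneg.2 hb
  unfold fFamilyDeriv
  -- a nonnegative combination of these quartic monomials in the slacks certifies the sign
  linarith [
    mul_nonneg₄ ha h₁ h₁ h₃, mul_nonneg₄ ha h₁ h₁ h₄, mul_nonneg₄ ha h₁ h₂ h₂,
    mul_nonneg₄ ha h₁ h₂ h₃, mul_nonneg₄ ha h₁ h₂ h₄, mul_nonneg₄ ha h₁ h₃ h₃,
    mul_nonneg₄ ha h₁ h₃ h₄, mul_nonneg₄ ha h₁ h₄ h₄, mul_nonneg₄ h₁ h₁ h₁ h₁,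
    mul_nonneg₄ h₁ h₁ h₁ h₂, mul_nonneg₄ h₁ h₁ h₁ h₃, mul_nonneg₄ h₁ h₂ h₂ h₂,
    mul_nonneg₄ h₁ h₂ h₂ h₃, mul_nonneg₄ h₁ h₂ h₂ h₄, mul_nonneg₄ h₁ h₂ h₃ h₃,
    mul_nonneg₄ h₁ h₂ h₃ h₄, mul_nonneg₄ h₁ h₂ h₄ h₄, mul_nonneg₄ h₁ h₃ h₃ h₃,
    mul_nonneg₄ h₁ h₃ h₃ h₄, mul_nonneg₄ h₂ h₂ h₂ h₃, mul_nonneg₄ h₂ h₂ h₂ h₄,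
    mul_nonneg₄ h₂ h₂ h₃ h₃, mul_nonneg₄ h₂ h₂ h₃ h₄, mul_nonneg₄ h₂ h₂ h₄ h₄,
    mul_nonneg₄ h₂ h₃ h₃ h₃, mul_nonneg₄ h₂ h₃ h₃ h₄, mul_nonneg₄ h₂ h₃ h₄ h₄,
    mul_nonneg₄ h₂ h₄ h₄ h₄, mul_nonneg₄ h₃ h₃ h₃ h₃, mul_nonneg₄ h₃ h₃ h₃ h₄,
    mul_nonneg₄ h₃ h₃ h₄ h₄]

theorem fFamilyDeriv_neg_right (ha : 0 ≤ a) (hab : a ≤ b) (hbc : b ≤ c)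
    (hb : 1 / 10 ≤ b) (hc : c ≤ 1 / 2) :
    fFamilyDeriv a b c ((18 + 3 * a + 34 * b + 20 * c) / 80 + (1 - b) / 2) < 0 := by
  have h₁ : 0 ≤ b - a := sub_nonneg.2 hab
  have h₂ : 0 ≤ c - b := sub_nonneg.2 hbc
  have h₃ : 0 ≤ 1 / 2 - c := sub_nonneg.2 hc
  have h₄ : 0 ≤ b - 1 / 10 := sub_nonneg.2 hb
  unfold fFamilyDeriv
  linarith [
    mul_nonneg₄ ha h₁ h₁ h₂, mul_nonneg₄ ha h₁ h₁ h₃, mul_nonneg₄ ha h₁ h₁ h₄,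
    mul_nonneg₄ h₁ h₁ h₁ h₁, mul_nonneg₄ h₁ h₁ h₂ h₂, mul_nonneg₄ h₁ h₁ h₂ h₃,
    mul_nonneg₄ h₁ h₁ h₂ h₄, mul_nonneg₄ h₁ h₁ h₃ h₃, mul_nonneg₄ h₁ h₁ h₃ h₄,
    mul_nonneg₄ h₁ h₁ h₄ h₄, mul_nonneg₄ h₁ h₂ h₂ h₃, mul_nonneg₄ h₁ h₂ h₂ h₄,
    mul_nonneg₄ h₁ h₂ h₃ h₃, mul_nonneg₄ h₁ h₂ h₃ h₄, mul_nonneg₄ h₁ h₂ h₄ h₄,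
    mul_nonneg₄ h₁ h₃ h₃ h₃, mul_nonneg₄ h₁ h₃ h₃ h₄, mul_nonneg₄ h₁ h₃ h₄ h₄,
    mul_nonneg₄ h₁ h₄ h₄ h₄, mul_nonneg₄ h₂ h₂ h₂ h₃, mul_nonneg₄ h₂ h₂ h₂ h₄,
    mul_nonneg₄ h₂ h₂ h₃ h₃, mul_nonneg₄ h₂ h₂ h₃ h₄, mul_nonneg₄ h₂ h₂ h₄ h₄,
    mul_nonneg₄ h₂ h₃ h₃ h₃, mul_nonneg₄ h₂ h₃ h₃ h₄, mul_nonneg₄ h₂ h₃ h₄ h₄,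
    mul_nonneg₄ h₂ h₄ h₄ h₄, mul_nonneg₄ h₃ h₃ h₃ h₃, mul_nonneg₄ h₃ h₃ h₃ h₄,
    mul_nonneg₄ h₃ h₃ h₄ h₄]

end FFamily

theorem F_family_b_ge_01_c_le_05_Rminus_general
    (a b c : ℝ) (ha : 0 ≤ a) (hab : a ≤ b) (hbc : b ≤ c)
    (hb : 0.1 ≤ b) (hc : c ≤ 0.5)
    (ξ₁ ξ₂ ξ₃ ξ₄ : ℝ) (hξ12 : ξ₁ ≤ ξ₂) (hξ23 : ξ₂ ≤ ξ₃) (hξ34 : ξ₃ ≤ ξ₄)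
    (hder : ∀ x : ℝ,
      deriv (fun t : ℝ => t * (t - a) * (t - b) * (t - c) * (t - 1)) x
        = 5 * (x - ξ₁) * (x - ξ₂) * (x - ξ₃) * (x - ξ₄))
    (z₁ z₂ z₃ z₄ M Mt : ℝ)
    (hz₁ : z₁ = a / 2) (hz₂ : z₂ = (a + b) / 2)
    (hz₃ : z₃ = (b + c) / 2) (hz₄ : z₄ = (c + 1) / 2)
    (hM : M = max (max (z₂ - z₁) (z₃ - z₂)) (z₄ - z₃))
    (hMt : Mt = max (max (ξ₂ - ξ₁) (ξ₃ - ξ₂)) (ξ₄ - ξ₃)) :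
    Mt > M ∧ ξ₄ - ξ₃ > z₄ - z₃ ∧ z₄ - z₃ = M := by
  norm_num at hb hc
  have hroots (x : ℝ) :
      fFamilyDeriv a b c x = 5 * ((x - ξ₁) * (x - ξ₂) * (x - ξ₃) * (x - ξ₄)) := by
    rw [← (hasDerivAt_fFamily a b c x).deriv, hder]
    ring
  set u := (18 + 3 * a + 34 * b + 20 * c) / 80 with hu
  have hξ₂ : ξ₂ < u := (fFamilyDeriv_second_root_le (by linarith) hab hbc (by linarith)
    hξ12 hξ23 hξ34 hroots).trans_lt (by linarith [hu])
  have hξ₃ : ξ₃ < u := (mem_Ioo_of_root_prod_neg hξ12 hξ34 hξ₂ (by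
    linarith [hroots u, fFamilyDeriv_neg_left ha hab hbc hb hc])).1
  have hξ₄ : u + (1 - b) / 2 < ξ₄ := (mem_Ioo_of_root_prod_neg hξ12 hξ34 (by linarith) (by
    linarith [hroots (u + (1 - b) / 2), fFamilyDeriv_neg_right ha hab hbc hb hc])).2
  have hgap : z₄ - z₃ = (1 - b) / 2 := by rw [hz₃, hz₄]; ring
  have hM_eq : M = z₄ - z₃ := by
    rw [hM, max_eq_right]
    rw [hz₁, hz₂, hz₃, hz₄]
    exact max_le (by linarith) (by linarith)
  refine ⟨?_, by linarith, hM_eq.symm⟩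
  rw [hMt]
  exact lt_of_lt_of_le (by linarith) (le_max_right _ _)

/-- For `F(x) = x(x-a)(x-b)(x-c)(x-1)` with `0 ≤ a ≤ b ≤ c ≤ 1`, `b ≥ 0.1` and `c ≤ 0.5`,
the case R+ fails: `M̃ > M`; more precisely `ξ₄ - ξ₃ > z₄ - z₃ = M`. -/
theorem F_family_b_ge_01_c_le_05_Rminus
    (a b c : ℝ) (ha : 0 ≤ a) (hab : a ≤ b) (hbc : b ≤ c) (hc1 : c ≤ 1)
    (hb : 0.1 ≤ b) (hc : c ≤ 0.5)
    (ξ₁ ξ₂ ξ₃ ξ₄ : ℝ) (hξ12 : ξ₁ ≤ ξ₂) (hξ23 : ξ₂ ≤ ξ₃) (hξ34 : ξ₃ ≤ ξ₄)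
    (hder : ∀ x : ℝ,
      deriv (fun t : ℝ => t * (t - a) * (t - b) * (t - c) * (t - 1)) x
        = 5 * (x - ξ₁) * (x - ξ₂) * (x - ξ₃) * (x - ξ₄))
    (z₁ z₂ z₃ z₄ M Mt : ℝ)
    (hz₁ : z₁ = a / 2) (hz₂ : z₂ = (a + b) / 2)
    (hz₃ : z₃ = (b + c) / 2) (hz₄ : z₄ = (c + 1) / 2)
    (hM : M = max (max (z₂ - z₁) (z₃ - z₂)) (z₄ - z₃))
    (hMt : Mt = max (max (ξ₂ - ξ₁) (ξ₃ - ξ₂)) (ξ₄ - ξ₃)) :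
    Mt > M ∧ ξ₄ - ξ₃ > z₄ - z₃ ∧ z₄ - z₃ = M :=
  F_family_b_ge_01_c_le_05_Rminus_general a b c ha hab hbc hb hc ξ₁ ξ₂ ξ₃ ξ₄ hξ12 hξ23 hξ34 hder z₁
    z₂ z₃ z₄ M Mt hz₁ hz₂ hz₃ hz₄ hM hMt
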